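/- Let K ≥ 2, let ℓ_1,...,ℓ_K be non-negative integers, write ℓ_i = 2(K−1)s_i + r_i with 0 ≤ r_i < 2(K−1), and let W_init = W_res · W · W_rev, where W_res = A_1^{r_1}⋯A_K^{r_K}, W is the concatenation over all pairs i < j (in lexicographic order) of A_i^{s_i} A_j^{s_j}, and W_rev is the reverse of W. Then the Parikh image of W_init is (ℓ_1,...,ℓ_K) and for all i < j: δ_ij(W_init) = r_i r_j + 2(K−1)(r_i s_j − r_j s_i); in particular |δ_ij(W_init)| < 4K² + 2(K−1)(ℓ_i + ℓ_j) and δ_ij(W_init) ≡ ℓ_i ℓ_j (mod 2). -/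
import Mathlib


def delta {α : Type*} [DecidableEq α] (i j : α) : List α → ℤ
  | [] => 0
  | a :: w => delta i j w + (if a = i then (w.count j : ℤ) else 0)
      - (if a = j then (w.count i : ℤ) else 0)

/-- W_res = A_1^{r_1} ⋯ A_K^{r_K}. -/
def Wres (K : ℕ) (r : Fin K → ℕ) : List (Fin K) :=
  (List.finRange K).flatMap (fun i => List.replicate (r i) i)

/-- W = concatenation over all pairs i < j, in lexicographic order, of A_i^{s_i} A_j^{s_j}. -/
def Wmid (K : ℕ) (s : Fin K → ℕ) : List (Fin K) :=
  (List.finRange K).flatMap (fun i =>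
    ((List.finRange K).filter (fun j => decide (i < j))).flatMap
      (fun j => List.replicate (s i) i ++ List.replicate (s j) j))

section lemmas
variable {α : Type*} [DecidableEq α] (i j : α)

lemma delta_cons (a : α) (w : List α) :
    delta i j (a :: w) = delta i j w + (if a = i then (w.count j : ℤ) else 0)
      - (if a = j then (w.count i : ℤ) else 0) := rfl

lemma delta_append (u v : List α) :
    delta i j (u ++ v) = delta i j u + delta i j v
      + (u.count i : ℤ) * v.count j - (u.count j : ℤ) * v.count i := by
  induction u with
  | nil => simp [delta]
  | cons a u ih =>
      rw [List.cons_append, delta_cons, delta_cons, ih]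
      simp only [List.count_append, List.count_cons, beq_iff_eq]
      push_cast
      split_ifs <;> subst_vars <;> first | ring | (exfalso; simp_all)

lemma delta_reverse (w : List α) : delta i j w.reverse = - delta i j w := by
  induction w with
  | nil => simp [delta]
  | cons a w ih =>
      rw [List.reverse_cons, delta_append, ih, delta_cons]
      simp only [List.count_reverse, List.count_cons, List.count_nil, beq_iff_eq,
        delta, List.count_singleton]
      push_cast
      split_ifs <;> subst_vars <;> first | ring | (exfalso; simp_all)

lemma delta_replicate (n : ℕ) (a : α) : delta i j (List.replicate n a) = 0 := by
  induction n with
  | zero => simp [delta]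
  | succ n ih =>
      rw [List.replicate_succ, delta_cons, ih, List.count_replicate, List.count_replicate]
      by_cases hai : a = i <;> by_cases haj : a = j <;> simp_all

end lemmas

section counting
variable {α : Type*} [DecidableEq α]

lemma count_flatMap_replicate (x : α) (r : α → ℕ) (l : List α) :
    (l.flatMap fun a => List.replicate (r a) a).count x = l.count x * r x := by
  induction l with
  | nil => simp
  | cons a t ih =>
      rw [List.flatMap_cons, List.count_append, ih, List.count_replicate, List.count_cons]
      by_cases h : x = a
      · subst h; simp [Nat.succ_mul, Nat.add_comm]
      · simp [h, Ne.symm h]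

lemma sum_map_ite_eq (x : α) (f : α → ℕ) (l : List α) :
    (l.map fun a => if a = x then f a else 0).sum = l.count x * f x := by
  induction l with
  | nil => simp
  | cons a t ih =>
      rw [List.map_cons, List.sum_cons, ih, List.count_cons]
      by_cases h : x = a
      · subst h; simp [Nat.succ_mul, Nat.add_comm]
      · simp [h, Ne.symm h]

lemma sum_map_ite_const (p : α → Bool) (c : ℕ) (l : List α) :
    (l.map fun a => if p a then c else 0).sum = l.countP p * c := by
  induction l with
  | nil => simp
  | cons a t ih =>
      rw [List.map_cons, List.sum_cons, ih, List.countP_cons]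
      by_cases h : p a = true <;> simp [h, Nat.succ_mul, Nat.add_mul, Nat.add_comm]

lemma countP_lt_add_countP_gt [LinearOrder α] (x : α) (l : List α) :
    l.countP (fun a => decide (a < x)) + l.countP (fun a => decide (x < a)) + l.count x
      = l.length := by
  induction l with
  | nil => simp
  | cons a t ih =>
      rw [List.countP_cons, List.countP_cons, List.count_cons, List.length_cons, ← ih]
      rcases lt_trichotomy a x with h | h | h
      · simp [h, not_lt.mpr h.le, ne_of_lt h]
        omega
      · subst h
        simp
        omega
      · simp [h, not_lt.mpr h.le, ne_of_gt h]
        omega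

end counting

section blocks
variable {K : ℕ}

lemma delta_flatMap_replicate (i j : Fin K) (hij : i < j) (r : Fin K → ℕ) :
    ∀ l : List (Fin K), l.Pairwise (· < ·) →
      delta i j (l.flatMap fun a => List.replicate (r a) a)
        = (l.count i : ℤ) * l.count j * r i * r j := by
  intro l hl
  induction l with
  | nil => simp [delta]
  | cons a t ih =>
      rw [List.pairwise_cons] at hl
      obtain ⟨ha, ht⟩ := hl
      have hnotin : ∀ b : Fin K, (∀ c ∈ t, b ≤ c → False) → t.count b = 0 := by
        intro b hb
        exact List.count_eq_zero.mpr fun hmem => hb b hmem le_rfl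
      rw [List.flatMap_cons, delta_append, delta_replicate, ih ht,
        count_flatMap_replicate, count_flatMap_replicate,
        List.count_replicate, List.count_replicate, List.count_cons, List.count_cons]
      by_cases hai : a = i
      · subst hai
        have h1 : t.count a = 0 := List.count_eq_zero.mpr fun hm => lt_irrefl a (ha a hm)
        have h2 : ¬ a = j := fun h => absurd hij (h ▸ lt_irrefl a)
        simp [h1, h2, hij.ne]
        push_cast
        try ring
      · by_cases haj : a = j
        · subst haj
          have h1 : t.count a = 0 := List.count_eq_zero.mpr fun hm => lt_irrefl a (ha a hm)
          have h2 : t.count i = 0 :=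
            List.count_eq_zero.mpr fun hm => absurd (hij.trans (ha i hm)) (lt_irrefl i)
          simp [h1, h2, hai, hij.ne']
          try push_cast
          try ring
        · simp [hai, haj, Ne.symm hai, Ne.symm haj]
          try push_cast
          try ring

end blocks

section words

lemma sum_map_ite_const' {α : Type*} [DecidableEq α] (p : α → Prop) [DecidablePred p]
    (c : ℕ) (l : List α) :
    (l.map fun a => if p a then c else 0).sum = l.countP (fun a => decide (p a)) * c := by
  induction l with
  | nil => simp
  | cons a t ih =>
      rw [List.map_cons, List.sum_cons, ih, List.countP_cons]
      by_cases h : p a <;> simp [h, Nat.add_mul]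
      omega

lemma count_Wres (K : ℕ) (r : Fin K → ℕ) (x : Fin K) : (Wres K r).count x = r x := by
  rw [Wres, count_flatMap_replicate,
    List.count_eq_one_of_mem (List.nodup_finRange K) (List.mem_finRange x), one_mul]

lemma delta_Wres (K : ℕ) (r : Fin K → ℕ) (i j : Fin K) (hij : i < j) :
    delta i j (Wres K r) = (r i : ℤ) * r j := by
  have h := delta_flatMap_replicate i j hij r (List.finRange K) (List.pairwise_lt_finRange K)
  rw [Wres]
  refine h.trans ?_
  rw [List.count_eq_one_of_mem (List.nodup_finRange K) (List.mem_finRange i),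
    List.count_eq_one_of_mem (List.nodup_finRange K) (List.mem_finRange j)]
  push_cast
  ring

lemma count_filter_finRange_lt (K : ℕ) (a x : Fin K) :
    ((List.finRange K).filter (fun b => decide (a < b))).count x
      = if a < x then 1 else 0 := by
  by_cases h : a < x
  · rw [if_pos h]
    exact List.count_eq_one_of_mem ((List.nodup_finRange K).filter _)
      (by simp [List.mem_filter, h])
  · rw [if_neg h]
    exact List.count_eq_zero.mpr (by simp [List.mem_filter, h])

lemma count_Wmid (K : ℕ) (s : Fin K → ℕ) (x : Fin K) :
    (Wmid K s).count x = (K - 1) * s x := by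
  have hinner : ∀ a : Fin K,
      ((((List.finRange K).filter (fun j => decide (a < j))).flatMap
        (fun j => List.replicate (s a) a ++ List.replicate (s j) j)).count x)
      = (if a = x then ((List.finRange K).filter (fun b => decide (a < b))).length * s a else 0)
        + (if a < x then s x else 0) := by
    intro a
    rw [List.count_flatMap]
    have hfun : (List.count x ∘ fun j => List.replicate (s a) a ++ List.replicate (s j) j)
        = fun b => (if a = x then s a else 0) + (if b = x then s b else 0) := by
      funext b
      simp [List.count_append, List.count_replicate]
    rw [hfun, List.sum_map_add]
    congr 1
    · rw [List.map_const', List.sum_replicate, smul_eq_mul]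
      by_cases h : a = x <;> simp [h, Nat.mul_comm]
    · rw [sum_map_ite_eq, count_filter_finRange_lt]
      by_cases h : a < x <;> simp [h]
  rw [Wmid, List.count_flatMap]
  have hfun : ((List.count x) ∘ fun a =>
        (((List.finRange K).filter (fun j => decide (a < j))).flatMap
          (fun j => List.replicate (s a) a ++ List.replicate (s j) j)))
      = fun a => (if a = x then ((List.finRange K).filter (fun b => decide (a < b))).length
            * s a else 0) + (if a < x then s x else 0) := by
    funext a
    exact hinner a
  rw [hfun, List.sum_map_add, sum_map_ite_eq,
    List.count_eq_one_of_mem (List.nodup_finRange K) (List.mem_finRange x), one_mul,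
    sum_map_ite_const' (fun a : Fin K => a < x) (s x),
    List.countP_eq_length_filter, ← Nat.add_mul]
  congr 1
  have h3 := countP_lt_add_countP_gt x (List.finRange K)
  rw [List.count_eq_one_of_mem (List.nodup_finRange K) (List.mem_finRange x),
    List.length_finRange] at h3
  rw [← List.countP_eq_length_filter, ← List.countP_eq_length_filter]
  omega

end words

/-- Properties of the initial word W_init = W_res · W · W_rev from the proof of
Proposition 4: its Parikh image is ℓ, and for i < j,
δ_ij(W_init) = r_i r_j + 2(K−1)(r_i s_j − r_j s_i), whence
|δ_ij(W_init)| < 4K² + 2(K−1)(ℓ_i + ℓ_j) and δ_ij(W_init) ≡ ℓ_i ℓ_j (mod 2). -/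
theorem stmt18 (K : ℕ) (hK : 2 ≤ K) (ℓ s r : Fin K → ℕ)
    (hsr : ∀ i, ℓ i = 2 * (K - 1) * s i + r i) (hr : ∀ i, r i < 2 * (K - 1)) :
    (∀ i : Fin K, (Wres K r ++ Wmid K s ++ (Wmid K s).reverse).count i = ℓ i) ∧
    ∀ i j : Fin K, i < j →
      delta i j (Wres K r ++ Wmid K s ++ (Wmid K s).reverse)
        = (r i : ℤ) * (r j : ℤ)
          + 2 * ((K : ℤ) - 1) * ((r i : ℤ) * (s j : ℤ) - (r j : ℤ) * (s i : ℤ)) ∧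
      |delta i j (Wres K r ++ Wmid K s ++ (Wmid K s).reverse)|
        < 4 * (K : ℤ) ^ 2 + 2 * ((K : ℤ) - 1) * ((ℓ i : ℤ) + (ℓ j : ℤ)) ∧
      delta i j (Wres K r ++ Wmid K s ++ (Wmid K s).reverse)
        ≡ (ℓ i : ℤ) * (ℓ j : ℤ) [ZMOD 2] := by
  have hK1 : 1 ≤ K := by omega
  have hKZ : ((K - 1 : ℕ) : ℤ) = (K : ℤ) - 1 := by
    push_cast [Nat.cast_sub hK1]
    ring
  constructor
  · intro i
    rw [List.count_append, List.count_append, List.count_reverse,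
      count_Wres, count_Wmid, hsr i]
    ring
  · intro i j hij
    have hli : (ℓ i : ℤ) = 2 * ((K:ℤ) - 1) * s i + r i := by
      have h := hsr i
      have : ((ℓ i : ℕ) : ℤ) = ((2 * (K - 1) * s i + r i : ℕ) : ℤ) := by rw [h]
      rw [this]
      push_cast [hKZ]
      ring
    have hlj : (ℓ j : ℤ) = 2 * ((K:ℤ) - 1) * s j + r j := by
      have h := hsr j
      have : ((ℓ j : ℕ) : ℤ) = ((2 * (K - 1) * s j + r j : ℕ) : ℤ) := by rw [h]
      rw [this]
      push_cast [hKZ]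
      ring
    have hδ : delta i j (Wres K r ++ Wmid K s ++ (Wmid K s).reverse)
        = (r i : ℤ) * (r j : ℤ)
          + 2 * ((K : ℤ) - 1) * ((r i : ℤ) * (s j : ℤ) - (r j : ℤ) * (s i : ℤ)) := by
      rw [delta_append, delta_append, delta_reverse,
        delta_Wres K r i j hij]
      rw [List.count_append, List.count_append, List.count_reverse, List.count_reverse,
        count_Wres, count_Wres, count_Wmid, count_Wmid]
      push_cast [hKZ]
      ring
    have hri : (r i : ℤ) < 2 * ((K:ℤ) - 1) := by have := hr i; omega
    have hrj : (r j : ℤ) < 2 * ((K:ℤ) - 1) := by have := hr j; omega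
    have hri0 : (0:ℤ) ≤ r i := Int.natCast_nonneg _
    have hrj0 : (0:ℤ) ≤ r j := Int.natCast_nonneg _
    have hsi0 : (0:ℤ) ≤ s i := Int.natCast_nonneg _
    have hsj0 : (0:ℤ) ≤ s j := Int.natCast_nonneg _
    have hKZ2 : (2:ℤ) ≤ (K:ℤ) := by exact_mod_cast hK
    refine ⟨hδ, ?_, ?_⟩
    · rw [hδ, abs_lt, hli, hlj]
      constructor
      · nlinarith [mul_nonneg hri0 hsj0, mul_nonneg hrj0 hsi0, mul_nonneg hri0 hrj0]
      · nlinarith [mul_nonneg hri0 hsj0, mul_nonneg hrj0 hsi0, mul_nonneg hri0 hrj0]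
    · rw [hδ, hli, hlj]
      refine Int.modEq_iff_dvd.mpr ?_
      refine ⟨2*((K:ℤ)-1)^2*(s i)*(s j) + 2*((K:ℤ)-1)*(r j)*(s i), by ring⟩
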